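/- arXiv:2307.13153 — 5 statements merged into one kernel-verified Lean document; each statement's English description precedes it below -/
import Mathlib

section
/- In an acute triangle with angles A, B, C and side BC = 1 (with vertices B=(0,0), C=(1,0), A=(p,q) where p = cos(B)sin(C)/sin(B+C) and q = sin(B)sin(C)/sin(B+C)), the minimum over x ∈ [0,1] of the squared distance between L₁ = xC + (1-x)A₁ and L₂ = xC₁ + (1-x)A, where A₁ = (p,-q) and C₁ = (cos(2B), sin(2B)), is attained at x₀ = cos(A)sin(C)/sin(B), and the minimum distance equals 2 sin(B) sin(C). -/
/-! Since `1 - cos 2B = 2 sin² B` and `sin C = sin (A + B)`, the squared distance is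
`4 (sin² B / sin A)² (x - x₀)² + (2 sin B sin C)²`, so it is minimised at `x₀` with minimum value
`(2 sin B sin C)²`. In an acute triangle `0 ≤ x₀ ≤ 1`, because
`sin B = sin A cos C + cos A sin C ≥ cos A sin C`. -/

open Real

lemma reflections_dist_sq_eq (B p q x : ℝ) :
    ((x * 1 + (1 - x) * p) - (x * cos (2 * B) + (1 - x) * p)) ^ 2 +
      ((x * 0 + (1 - x) * (-q)) - (x * sin (2 * B) + (1 - x) * q)) ^ 2 =
    4 * ((x * sin B ^ 2) ^ 2 + (q + x * (sin B * cos B - q)) ^ 2) := by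
  rw [cos_two_mul', sin_two_mul]
  linear_combination (-(x ^ 2 * (1 - cos B ^ 2 + 3 * sin B ^ 2))) * sin_sq_add_cos_sq B

lemma triangle_dist_sq_complete_square {A B C : ℝ} (hsum : A + B + C = π) (hA : sin A ≠ 0)
    (hB : sin B ≠ 0) (x : ℝ) :
    (x * sin B ^ 2) ^ 2 + (sin B * sin C / sin A + x * (sin B * cos B - sin B * sin C / sin A)) ^ 2 =
      (sin B ^ 2 / sin A) ^ 2 * (x - cos A * sin C / sin B) ^ 2 + (sin B * sin C) ^ 2 := by
  have hC : sin C = sin A * cos B + cos A * sin B := by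
    rw [← sin_add, ← sin_pi_sub]; congr 1; linarith
  have hline : sin B * sin C / sin A + x * (sin B * cos B - sin B * sin C / sin A) =
      sin B ^ 2 / sin A * (sin C / sin B - x * cos A) := by
    field_simp
    linear_combination (-x) * hC
  rw [hline]
  field_simp
  linear_combination (x ^ 2 * sin B ^ 2 - sin C ^ 2) * sin_sq_add_cos_sq A

theorem stmt_0_general (A B C : ℝ) (hA : A ∈ Set.Ioo 0 (π/2)) (hB : B ∈ Set.Ioo 0 (π/2))
    (hC : C ∈ Set.Ioo 0 (π/2)) (hsum : A + B + C = π)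
    (p q x₀ : ℝ)
    (hq : q = sin B * sin C / sin (B + C))
    (hx₀ : x₀ = cos A * sin C / sin B)
    (f : ℝ → ℝ)
    (hf : ∀ x, f x =
      ((x * 1 + (1 - x) * p) - (x * cos (2*B) + (1 - x) * p))^2 +
      ((x * 0 + (1 - x) * (-q)) - (x * sin (2*B) + (1 - x) * q))^2) :
    x₀ ∈ Set.Icc (0:ℝ) 1 ∧ (∀ x ∈ Set.Icc (0:ℝ) 1, f x₀ ≤ f x) ∧
      Real.sqrt (f x₀) = 2 * sin B * sin C := by
  obtain ⟨hA0, hA2⟩ := hA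
  obtain ⟨hB0, hB2⟩ := hB
  obtain ⟨hC0, hC2⟩ := hC
  have hsA : 0 < sin A := sin_pos_of_pos_of_lt_pi hA0 (by linarith)
  have hsB : 0 < sin B := sin_pos_of_pos_of_lt_pi hB0 (by linarith)
  have hsC : 0 < sin C := sin_pos_of_pos_of_lt_pi hC0 (by linarith)
  have hcA : 0 < cos A := cos_pos_of_mem_Ioo ⟨by linarith, hA2⟩
  have hcC : 0 < cos C := cos_pos_of_mem_Ioo ⟨by linarith, hC2⟩
  have hsBC : sin (B + C) = sin A := by rw [← sin_pi_sub]; congr 1; linarith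
  have hf_sq : ∀ x, f x = 4 * (sin B ^ 2 / sin A) ^ 2 * (x - x₀) ^ 2 + (2 * sin B * sin C) ^ 2 := by
    intro x
    rw [hf, reflections_dist_sq_eq, hq, hsBC,
      triangle_dist_sq_complete_square hsum hsA.ne' hsB.ne', hx₀]
    ring
  have hsB_eq : sin B = sin A * cos C + cos A * sin C := by
    rw [← sin_add, ← sin_pi_sub]; congr 1; linarith
  refine ⟨⟨by rw [hx₀]; positivity, ?_⟩, fun x _ => ?_, ?_⟩
  · rw [hx₀, div_le_one hsB, hsB_eq]
    linarith [mul_pos hsA hcC]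
  · rw [hf_sq x₀, hf_sq x, sub_self, zero_pow two_ne_zero, mul_zero, zero_add]
    exact le_add_of_nonneg_left (by positivity)
  · rw [hf_sq, sub_self, Real.sqrt_eq_iff_mul_self_eq_of_pos (by positivity)]
    ring

theorem stmt_0 (A B C : ℝ) (hA : A ∈ Set.Ioo 0 (π/2)) (hB : B ∈ Set.Ioo 0 (π/2))
    (hC : C ∈ Set.Ioo 0 (π/2)) (hsum : A + B + C = π)
    (p q x₀ : ℝ)
    (hp : p = cos B * sin C / sin (B + C)) (hq : q = sin B * sin C / sin (B + C))
    (hx₀ : x₀ = cos A * sin C / sin B)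
    (f : ℝ → ℝ)
    (hf : ∀ x, f x =
      ((x * 1 + (1 - x) * p) - (x * cos (2*B) + (1 - x) * p))^2 +
      ((x * 0 + (1 - x) * (-q)) - (x * sin (2*B) + (1 - x) * q))^2) :
    x₀ ∈ Set.Icc (0:ℝ) 1 ∧ (∀ x ∈ Set.Icc (0:ℝ) 1, f x₀ ≤ f x) ∧
      Real.sqrt (f x₀) = 2 * sin B * sin C :=
  stmt_0_general A B C hA hB hC hsum p q x₀ hq hx₀ f hf
end

section
/- Let triangle ABC be placed with B = (0,0), C = (1,0), A = (x,y) with y > 0. Let K = (x, 0) be the foot of the altitude from A, let M = (x²/(x²+y²), xy/(x²+y²)) be the foot of the altitude from C onto AB, let C' = (1 - 2y²/(x²+y²), 2xy/(x²+y²)) be the reflection of C about line AB, and let L₁ be the orthogonal projection of B onto the line through A and C'. Then the points K, M, L₁ are collinear. -/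
/-!
`C'` is the reflection of `C = (1, 0)` in the line `BA` through the origin, so `A · C' = A · C = x`
and `|C'| = |C| = 1`. Hence `|A - C'| = |A - C|` and `A · (A - C') = |A|² - x`, which makes the
parameter `r` of the foot `L₁ = A + r (C' - A)` equal to `(x² + y² - x) / ((x - 1)² + y²)`.
With `r` explicit, collinearity of `K`, `M`, `L₁` is a rational-function identity.
-/

section ReflectionOfUnitPoint

variable {x y : ℝ}

theorem reflection_inner_self (hs : x ^ 2 + y ^ 2 ≠ 0) :
    x * (1 - 2 * y ^ 2 / (x ^ 2 + y ^ 2)) + y * (2 * x * y / (x ^ 2 + y ^ 2)) = x := by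
  field_simp
  ring

theorem reflection_normSq (hs : x ^ 2 + y ^ 2 ≠ 0) :
    (1 - 2 * y ^ 2 / (x ^ 2 + y ^ 2)) ^ 2 + (2 * x * y / (x ^ 2 + y ^ 2)) ^ 2 = 1 := by
  field_simp
  ring

end ReflectionOfUnitPoint

theorem det_feet_eq_zero {x y r : ℝ} (hs : x ^ 2 + y ^ 2 ≠ 0) (hAC : (x - 1) ^ 2 + y ^ 2 ≠ 0)
    (hr : r = (x ^ 2 + y ^ 2 - x) / ((x - 1) ^ 2 + y ^ 2)) :
    Matrix.det !![x, 0, 1;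
      x ^ 2 / (x ^ 2 + y ^ 2), x * y / (x ^ 2 + y ^ 2), 1;
      r * (1 - 2 * y ^ 2 / (x ^ 2 + y ^ 2)) + (1 - r) * x,
        r * (2 * x * y / (x ^ 2 + y ^ 2)) + (1 - r) * y, 1] = 0 := by
  rw [Matrix.det_fin_three, hr]
  simp only [Matrix.of_apply, Matrix.cons_val', Matrix.cons_val_zero, Matrix.cons_val_one,
    Matrix.cons_val_two, Matrix.empty_val', Matrix.cons_val_fin_one, Matrix.head_cons,
    Matrix.tail_cons, Matrix.head_fin_const]
  field_simp
  ring

/-- Points are given in coordinates; collinearity of `K`, `M`, `L₁` is stated as the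
vanishing of the determinant of the matrix of homogeneous coordinates. -/
theorem stmt_5 (x y : ℝ) (hy : 0 < y)
    (K M C' L₁ : ℝ × ℝ) (r : ℝ)
    (hK : K = (x, 0))
    (hM : M = (x^2 / (x^2 + y^2), x * y / (x^2 + y^2)))
    (hC' : C' = (1 - 2 * y^2 / (x^2 + y^2), 2 * x * y / (x^2 + y^2)))
    (hr : r = (x^2 - x * C'.1 + y * (y - C'.2)) / ((x - C'.1)^2 + (y - C'.2)^2))
    (hL₁ : L₁ = (r * C'.1 + (1 - r) * x, r * C'.2 + (1 - r) * y)) :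
    Matrix.det !![K.1, K.2, 1; M.1, M.2, 1; L₁.1, L₁.2, 1] = 0 := by
  have hs : x ^ 2 + y ^ 2 ≠ 0 := by positivity
  have hAC : (x - 1) ^ 2 + y ^ 2 ≠ 0 := by positivity
  subst hK hM hL₁ hC'
  have hinner := reflection_inner_self hs
  have hnorm := reflection_normSq hs
  refine det_feet_eq_zero hs hAC (hr.trans ?_)
  congr 1
  · linear_combination -hinner
  · linear_combination hnorm - 2 * hinner
end

section
/- Composing five reflections of a triangle ABC (reflect C about AB, then B about AC₁, then A about B₁C₁, then C₁ about A₁B₁, then B₁ about A₁C₂) rotates the direction of the image of segment BC by total angle 2B + 3C + 3A + B = 3π; hence the line through B₂ and C₂ is parallel to the line through B and C. -/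
open scoped RealInnerProductSpace

/-!
Let `g` be the composite of the first three reflections. It maps `A, B, C` to `A₁, B₁, C₁`, so the
fourth and fifth reflections, in `A₁B₁ = g(AB)` and `A₁C₂ = g(AC₁)`, are the conjugates by `g` of
the first two; hence `C₂ = g C₁` and `B₂ = g B₁`. As also `C₁ = g C` and `B₁ = g B`, the vector
`C₂ - B₂` is the image of `C - B` under the square of the linear part of `g`. That linear part is a
product of three line reflections of the plane, so it has determinant `-1`, and an
orientation-reversing linear isometry of the plane is a reflection, hence an involution. Thus
`C₂ - B₂ = C - B`.
-/

open Module EuclideanGeometry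

theorem Complex.linearIsometryEquiv_involutive_of_det_eq_neg_one (f : ℂ ≃ₗᵢ[ℝ] ℂ)
    (hf : LinearEquiv.det f.toLinearEquiv = -1) : Function.Involutive f := by
  obtain ⟨a, rfl | rfl⟩ := linear_isometry_complex f
  · rw [linearEquiv_det_rotation] at hf
    norm_num at hf
  · intro z
    simp [← Circle.coe_inv_eq_conj]

variable {V P : Type*} [NormedAddCommGroup V] [InnerProductSpace ℝ V] [MetricSpace P]
  [NormedAddTorsor V P]

attribute [local instance] FiniteDimensional.of_fact_finrank_eq_two

theorem LinearIsometryEquiv.involutive_of_det_eq_neg_one [Fact (finrank ℝ V = 2)]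
    (f : V ≃ₗᵢ[ℝ] V) (hf : LinearEquiv.det f.toLinearEquiv = -1) : Function.Involutive f := by
  let e : V ≃ₗᵢ[ℝ] ℂ := ((stdOrthonormalBasis ℝ V).reindex (finCongr Fact.out)).repr.trans
    Complex.orthonormalBasisOneI.repr.symm
  have hc := Complex.linearIsometryEquiv_involutive_of_det_eq_neg_one ((e.symm.trans f).trans e)
    (by rw [← hf]; exact LinearEquiv.det_conj f.toLinearEquiv e.toLinearEquiv)
  intro v
  simpa using hc (e v)

namespace EuclideanGeometry

theorem eq_reflection_of_midpoint_mem_of_vsub_mem_orthogonal {s : AffineSubspace ℝ P}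
    [Nonempty s] [s.direction.HasOrthogonalProjection] {p q : P}
    (hm : midpoint ℝ p q ∈ s) (ho : q -ᵥ p ∈ s.directionᗮ) : q = reflection s p := by
  have hv : p -ᵥ midpoint ℝ p q ∈ s.directionᗮ := by
    rw [left_vsub_midpoint, ← neg_vsub_eq_vsub_rev, smul_neg]
    exact s.directionᗮ.neg_mem (s.directionᗮ.smul_mem _ ho)
  rw [← vsub_vadd p (midpoint ℝ p q), reflection_orthogonal_vadd hm hv, neg_vsub_eq_vsub_rev,
    midpoint_vsub_left, ← right_vsub_midpoint, vsub_vadd]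

theorem reflection_line_eq_of_midpoint_mem_of_inner_vsub_eq_zero {p q x y : P}
    (hm : midpoint ℝ p q ∈ line[ℝ, x, y]) (ho : ⟪q -ᵥ p, y -ᵥ x⟫ = 0) :
    reflection line[ℝ, x, y] p = q := by
  refine (eq_reflection_of_midpoint_mem_of_vsub_mem_orthogonal hm ?_).symm
  rw [direction_affineSpan, vectorSpan_pair_rev,
    Submodule.mem_orthogonal_singleton_iff_inner_right, real_inner_comm, ho]

theorem reflection_map_line {V₂ P₂ : Type*} [NormedAddCommGroup V₂] [InnerProductSpace ℝ V₂]
    [MetricSpace P₂] [NormedAddTorsor V₂ P₂] (f : P →ᵃⁱ[ℝ] P₂) (x y p : P) :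
    reflection line[ℝ, f x, f y] (f p) = f (reflection line[ℝ, x, y] p) := by
  rw [← reflection_map line[ℝ, x, y] f]
  refine eq_reflection_of_eq_subspace ?_ _
  rw [AffineSubspace.map_span, Set.image_pair]
  rfl

variable [Fact (finrank ℝ V = 2)]

theorem det_reflection_line {x y : P} (h : x ≠ y) :
    LinearEquiv.det (reflection line[ℝ, x, y]).linearIsometryEquiv.toLinearEquiv = -1 := by
  have hv : x -ᵥ y ≠ 0 := vsub_ne_zero.mpr h
  change LinearEquiv.det (line[ℝ, x, y]).direction.reflection.toLinearEquiv = -1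
  rw [Submodule.linearEquiv_det_reflection, direction_affineSpan, vectorSpan_pair,
    Submodule.finrank_orthogonal_span_singleton (n := 1) (_i := ‹_›) hv, pow_one]

theorem involutive_linearIsometryEquiv_reflection_trans_reflection_trans_reflection
    {x₁ y₁ x₂ y₂ x₃ y₃ : P} (h₁ : x₁ ≠ y₁) (h₂ : x₂ ≠ y₂) (h₃ : x₃ ≠ y₃) :
    Function.Involutive (((reflection line[ℝ, x₁, y₁]).trans (reflection line[ℝ, x₂, y₂])).trans
      (reflection line[ℝ, x₃, y₃])).linearIsometryEquiv := by
  refine LinearIsometryEquiv.involutive_of_det_eq_neg_one _ ?_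
  change LinearEquiv.det (((reflection line[ℝ, x₁, y₁]).linearIsometryEquiv.toLinearEquiv.trans
    (reflection line[ℝ, x₂, y₂]).linearIsometryEquiv.toLinearEquiv).trans
      (reflection line[ℝ, x₃, y₃]).linearIsometryEquiv.toLinearEquiv) = -1
  rw [LinearEquiv.det_trans, LinearEquiv.det_trans, det_reflection_line h₁,
    det_reflection_line h₂, det_reflection_line h₃]
  norm_num

theorem vsub_eq_of_five_reflections {A B C C₁ B₁ A₁ C₂ B₂ : P}
    (hAB : A ≠ B) (hAC : A ≠ C) (hBC : B ≠ C)
    (hC₁ : reflection line[ℝ, A, B] C = C₁) (hB₁ : reflection line[ℝ, A, C₁] B = B₁)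
    (hA₁ : reflection line[ℝ, B₁, C₁] A = A₁) (hC₂ : reflection line[ℝ, A₁, B₁] C₁ = C₂)
    (hB₂ : reflection line[ℝ, A₁, C₂] B₁ = B₂) :
    C₂ -ᵥ B₂ = C -ᵥ B := by
  have fixL : ∀ x y : P, reflection line[ℝ, x, y] x = x := fun x y =>
    (reflection_eq_self_iff x).2 (left_mem_affineSpan_pair ℝ x y)
  have fixR : ∀ x y : P, reflection line[ℝ, x, y] y = y := fun x y =>
    (reflection_eq_self_iff y).2 (right_mem_affineSpan_pair ℝ x y)
  have hAC₁ : A ≠ C₁ := by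
    simpa [fixL, hC₁] using (reflection line[ℝ, A, B]).injective.ne hAC
  have hBC₁ : B ≠ C₁ := by
    simpa [fixR, hC₁] using (reflection line[ℝ, A, B]).injective.ne hBC
  have hB₁C₁ : B₁ ≠ C₁ := by
    simpa [fixR, hB₁] using (reflection line[ℝ, A, C₁]).injective.ne hBC₁
  set g := ((reflection line[ℝ, A, B]).trans (reflection line[ℝ, A, C₁])).trans
    (reflection line[ℝ, B₁, C₁])
  have hgA : g A = A₁ := by simp [g, fixL, hA₁]
  have hgB : g B = B₁ := by simp [g, fixL, fixR, hB₁]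
  have hgC : g C = C₁ := by simp [g, fixR, hC₁]
  have hgC₁ : g C₁ = C₂ := calc
    g C₁ = g (reflection line[ℝ, A, B] C) := by rw [hC₁]
    _ = reflection line[ℝ, g A, g B] (g C) := (reflection_map_line g.toAffineIsometry A B C).symm
    _ = C₂ := by rw [hgA, hgB, hgC, hC₂]
  have hgB₁ : g B₁ = B₂ := calc
    g B₁ = g (reflection line[ℝ, A, C₁] B) := by rw [hB₁]
    _ = reflection line[ℝ, g A, g C₁] (g B) := (reflection_map_line g.toAffineIsometry A C₁ B).symm
    _ = B₂ := by rw [hgA, hgC₁, hgB, hB₂]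
  rw [← hgC₁, ← hgB₁, ← hgC, ← hgB, ← g.map_vsub, ← g.map_vsub]
  exact involutive_linearIsometryEquiv_reflection_trans_reflection_trans_reflection hAB hAC₁
    hB₁C₁ _

end EuclideanGeometry

/-- Each reflection `Q` of a point `P` across the line through two points `X`, `Y`
is characterized by: the midpoint of `P Q` lies on the line, and `Q - P` is
orthogonal to `Y - X`.  After the five successive reflections producing
`C₁, B₁, A₁, C₂, B₂`, the line through `B₂` and `C₂` is parallel to the line
through `B` and `C`. -/
theorem stmt_6 (A B C C₁ B₁ A₁ C₂ B₂ : EuclideanSpace ℝ (Fin 2))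
    (hABC : AffineIndependent ℝ ![A, B, C])
    (hC₁m : midpoint ℝ C C₁ ∈ line[ℝ, A, B]) (hC₁o : ⟪C₁ - C, B - A⟫ = 0)
    (hB₁m : midpoint ℝ B B₁ ∈ line[ℝ, A, C₁]) (hB₁o : ⟪B₁ - B, C₁ - A⟫ = 0)
    (hA₁m : midpoint ℝ A A₁ ∈ line[ℝ, B₁, C₁]) (hA₁o : ⟪A₁ - A, C₁ - B₁⟫ = 0)
    (hC₂m : midpoint ℝ C₁ C₂ ∈ line[ℝ, A₁, B₁]) (hC₂o : ⟪C₂ - C₁, B₁ - A₁⟫ = 0)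
    (hB₂m : midpoint ℝ B₁ B₂ ∈ line[ℝ, A₁, C₂]) (hB₂o : ⟪B₂ - B₁, C₂ - A₁⟫ = 0) :
    ∃ t : ℝ, C₂ - B₂ = t • (C - B) := by
  have : Fact (finrank ℝ (EuclideanSpace ℝ (Fin 2)) = 2) := ⟨finrank_euclideanSpace_fin⟩
  have hne : ∀ i j : Fin 3, i ≠ j → ![A, B, C] i ≠ ![A, B, C] j := fun _ _ h =>
    hABC.injective.ne h
  refine ⟨1, ?_⟩
  rw [one_smul]
  exact vsub_eq_of_five_reflections (hne 0 1 (by decide)) (hne 0 2 (by decide))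
    (hne 1 2 (by decide))
    (reflection_line_eq_of_midpoint_mem_of_inner_vsub_eq_zero hC₁m hC₁o)
    (reflection_line_eq_of_midpoint_mem_of_inner_vsub_eq_zero hB₁m hB₁o)
    (reflection_line_eq_of_midpoint_mem_of_inner_vsub_eq_zero hA₁m hA₁o)
    (reflection_line_eq_of_midpoint_mem_of_inner_vsub_eq_zero hC₂m hC₂o)
    (reflection_line_eq_of_midpoint_mem_of_inner_vsub_eq_zero hB₂m hB₂o)
end

section
/- For all A, B, C ∈ [0, π/2] with A + B + C = π, the function f(A,B,C) = (sin A + sin B + sin C)/(2(1 + cos A cos B cos C)) satisfies 1 ≤ f(A,B,C) ≤ (1 + √2)/2, with the maximum attained at (π/4, π/4, π/2). -/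
/-!
In a triangle `sin² A + sin² B + sin² C = 2 (1 + cos A cos B cos C)`, so the lower bound is
`sin x ≥ sin² x`.

For the upper bound put `t = cos (C/2)` and `u = cos ((A - B)/2)`. Then `sin A + sin B = 2 t u`,
`cos A cos B = u² - t²` and `cos C = 2 t² - 1 ≥ 0`, and the angles being at most `π/2` gives
`t ≤ u ≤ 1`. For fixed `C` the difference of the two sides is a convex quadratic in `u`, and its
minimum on `[t, 1]` is nonnegative: at `u = t` this is `sin C + cos C ≤ √2`; at `u = 1` (the
isosceles case `A = B`, with equality at `C = π/2`) it follows from `2t ≤ √2 (1 + cos C / 2)` and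
`sin C ≤ 1 - cos² C / 2`; at an interior vertex it is a cubic inequality in `cos C`.
-/

open Real

lemma sin_add_cos_le_sqrt_two (x : ℝ) : sin x + cos x ≤ √2 :=
  le_sqrt_of_sq_le <| by nlinarith [sq_nonneg (sin x - cos x), sin_sq_add_cos_sq x]

lemma sin_le_one_sub_cos_sq_div_two (x : ℝ) : sin x ≤ 1 - cos x ^ 2 / 2 := by
  nlinarith [sq_nonneg (1 - sin x), sin_sq_add_cos_sq x]

lemma two_mul_cos_half_sq (x : ℝ) : 2 * cos (x / 2) ^ 2 = 1 + cos x := by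
  rw [cos_sq, mul_div_cancel₀ x two_ne_zero]; ring

section HalfAngles

variable {t u c y : ℝ}

lemma isosceles_bound (hc₀ : 0 ≤ c) (hc : 2 * t ^ 2 = 1 + c) (hc₁ : c ≤ √2 - 1)
    (hy : y ≤ 1 - c ^ 2 / 2) :
    2 * t + y ≤ (1 + √2) * (1 + c * (1 - t ^ 2)) := by
  have hr : √2 ^ 2 = 2 := sq_sqrt (by norm_num)
  have ht : 2 * t ≤ √2 * (1 + c / 2) := by nlinarith [sq_nonneg (√2 * t - 1)]
  have hrc : 0 ≤ 1 - √2 * c := by nlinarith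
  have hct : c * (1 - t ^ 2) = c / 2 - c ^ 2 / 2 := by linear_combination (-c / 2) * hc
  rw [hct]
  nlinarith [mul_nonneg hc₀ hrc]

lemma cubic_nonneg_of_le_of_le (hc₀ : 1 ≤ (2 + √2) * c) (hc₁ : c ≤ √2 - 1) :
    0 ≤ (3 + 2 * √2) * c - (3 + 2 * √2) * c ^ 2 - (2 + √2) * c ^ 3 - 1 := by
  have hr : √2 ^ 2 = 2 := sq_sqrt (by norm_num)
  have hr₁ := one_lt_sqrt_two
  have hc : 0 < c := by nlinarith
  -- the cubic is concave for `c > 0` and positive at both ends of the interval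
  nlinarith [mul_nonneg (by linarith : 0 ≤ (2 + √2) * c - 1) (by linarith : 0 ≤ √2 - 1 - c),
    sq_nonneg (c - 1 / 3), sq_nonneg (c - 2 / 5),
    mul_nonneg (mul_nonneg hc.le hc.le) (by linarith : 0 ≤ √2 - 1 - c)]

lemma upper_bound_in_half_angles (ht : 0 ≤ t) (hc₀ : 0 ≤ c) (hc : 2 * t ^ 2 = 1 + c)
    (htu : t ≤ u) (hu : u ≤ 1) (hy : y ≤ 1 - c ^ 2 / 2) (hyc : y + c ≤ √2) :
    2 * t * u + y ≤ (1 + √2) * (1 + c * (u ^ 2 - t ^ 2)) := by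
  have hr : √2 ^ 2 = 2 := sq_sqrt (by norm_num)
  have hr₁ := one_lt_sqrt_two
  have hrt : 1 ≤ √2 * t := by nlinarith [sq_nonneg (√2 * t - 1)]
  set k := (1 + √2) * c with hk
  have hk₀ : 0 ≤ k := by positivity
  rcases le_or_gt 1 k with hk₁ | hk₁
  · -- the quadratic in `u` increases on `[t, 1]`
    have hmono : 0 ≤ (u - t) * (k * (u + t) - 2 * t) := mul_nonneg (by linarith) (by nlinarith)
    nlinarith
  rcases le_or_gt k t with hkt | hkt
  · -- the quadratic in `u` decreases on `[t, 1]`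
    have hiso := isosceles_bound hc₀ hc (by nlinarith) hy
    have hmono : 0 ≤ (1 - u) * (2 * t - k * (u + 1)) := mul_nonneg (by linarith) (by nlinarith)
    nlinarith
  · -- the vertex `t / k` of the quadratic lies in `(t, 1)`
    have hcub := cubic_nonneg_of_le_of_le (c := c) (by nlinarith) (by nlinarith)
    have hvertex : k * (1 + √2) * (1 - c * t ^ 2) - k * y - t ^ 2
        = ((3 + 2 * √2) * c - (3 + 2 * √2) * c ^ 2 - (2 + √2) * c ^ 3 - 1) / 2
          + k * ((1 - c ^ 2 / 2) - y) := by
      rw [hk]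
      linear_combination (-((1 + √2) ^ 2 * c ^ 2 + 1) / 2) * hc + (c - c ^ 2 * (1 + c) / 2) * hr
    have hsq : k * ((1 + √2) * (1 + c * (u ^ 2 - t ^ 2)) - (2 * t * u + y))
        = (k * u - t) ^ 2 + (k * (1 + √2) * (1 - c * t ^ 2) - k * y - t ^ 2) := by ring
    have : 0 ≤ k * ((1 + √2) * (1 + c * (u ^ 2 - t ^ 2)) - (2 * t * u + y)) := by
      rw [hsq, hvertex]
      have := mul_nonneg hk₀ (sub_nonneg.2 hy)
      positivity
    linarith [(mul_nonneg_iff_of_pos_left (ht.trans_lt hkt)).mp this]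

end HalfAngles

section Triangle

variable {A B C : ℝ}

lemma sin_sq_add_sin_sq_add_sin_sq_of_add_eq_pi (h : A + B + C = π) :
    sin A ^ 2 + sin B ^ 2 + sin C ^ 2 = 2 * (1 + cos A * cos B * cos C) := by
  obtain rfl : C = π - (A + B) := by linarith
  rw [sin_pi_sub, cos_pi_sub, sin_add, cos_add]
  linear_combination (1 + cos B ^ 2) * sin_sq_add_cos_sq A + (1 + cos A ^ 2) * sin_sq_add_cos_sq B

lemma sin_add_sin_eq_of_add_eq_pi (h : A + B + C = π) :
    sin A + sin B = 2 * cos (C / 2) * cos ((A - B) / 2) := by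
  rw [sin_add_sin, show (A + B) / 2 = π / 2 - C / 2 by linarith, sin_pi_div_two_sub]

lemma cos_mul_cos_eq_of_add_eq_pi (h : A + B + C = π) :
    cos A * cos B = cos ((A - B) / 2) ^ 2 - cos (C / 2) ^ 2 := by
  have hAB : cos (A + B) = -cos C := by rw [show A + B = π - C by linarith, cos_pi_sub]
  have hA_B := two_mul_cos_half_sq (A - B)
  rw [cos_sub] at hA_B
  rw [cos_add] at hAB
  linarith [two_mul_cos_half_sq C]

lemma two_mul_one_add_cos_mul_cos_mul_cos_le (hA : 0 ≤ A) (hB : 0 ≤ B) (hC : 0 ≤ C)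
    (h : A + B + C = π) : 2 * (1 + cos A * cos B * cos C) ≤ sin A + sin B + sin C := by
  have sq_le {x : ℝ} (hx₀ : 0 ≤ x) (hx : x ≤ π) : sin x ^ 2 ≤ sin x := by
    nlinarith [sin_nonneg_of_nonneg_of_le_pi hx₀ hx, sin_le_one x]
  rw [← sin_sq_add_sin_sq_add_sin_sq_of_add_eq_pi h]
  gcongr ?_ + ?_ + ?_ <;> apply sq_le <;> linarith

lemma sin_add_sin_add_sin_le (hA : A ≤ π / 2) (hB : B ≤ π / 2) (hC₀ : 0 ≤ C) (hC : C ≤ π / 2)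
    (h : A + B + C = π) :
    sin A + sin B + sin C ≤ (1 + √2) * (1 + cos A * cos B * cos C) := by
  have ht : 0 ≤ cos (C / 2) := cos_nonneg_of_mem_Icc ⟨by linarith, by linarith⟩
  have htu : cos (C / 2) ≤ cos ((A - B) / 2) := by
    rw [← cos_abs ((A - B) / 2)]
    exact cos_le_cos_of_nonneg_of_le_pi (abs_nonneg _) (by linarith)
      (abs_le.2 ⟨by linarith, by linarith⟩)
  have key := upper_bound_in_half_angles ht (cos_nonneg_of_mem_Icc ⟨by linarith, hC⟩)
    (two_mul_cos_half_sq C) htu (cos_le_one _) (sin_le_one_sub_cos_sq_div_two C)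
    (sin_add_cos_le_sqrt_two C)
  rw [sin_add_sin_eq_of_add_eq_pi h, cos_mul_cos_eq_of_add_eq_pi h]
  linarith

end Triangle

theorem stmt_11 :
    (∀ A B C : ℝ, A ∈ Set.Icc 0 (π/2) → B ∈ Set.Icc 0 (π/2) → C ∈ Set.Icc 0 (π/2) →
      A + B + C = π →
      1 ≤ (sin A + sin B + sin C) / (2 * (1 + cos A * cos B * cos C)) ∧
      (sin A + sin B + sin C) / (2 * (1 + cos A * cos B * cos C)) ≤ (1 + Real.sqrt 2) / 2) ∧
    (sin (π/4) + sin (π/4) + sin (π/2)) / (2 * (1 + cos (π/4) * cos (π/4) * cos (π/2)))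
      = (1 + Real.sqrt 2) / 2 := by
  refine ⟨fun A B C ⟨hA₀, hA⟩ ⟨hB₀, hB⟩ ⟨hC₀, hC⟩ h ↦ ?_, ?_⟩
  · have hcos {x : ℝ} (hx₀ : 0 ≤ x) (hx : x ≤ π / 2) : 0 ≤ cos x :=
      cos_nonneg_of_mem_Icc ⟨by linarith, hx⟩
    have hD : 0 < 2 * (1 + cos A * cos B * cos C) := by
      have := mul_nonneg (mul_nonneg (hcos hA₀ hA) (hcos hB₀ hB)) (hcos hC₀ hC)
      positivity
    constructor
    · rw [le_div_iff₀ hD, one_mul]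
      exact two_mul_one_add_cos_mul_cos_mul_cos_le hA₀ hB₀ hC₀ h
    · rw [div_le_div_iff₀ hD two_pos]
      linarith [sin_add_sin_add_sin_le hA hB hC₀ hC h]
  · rw [sin_pi_div_four, sin_pi_div_two, cos_pi_div_four, cos_pi_div_two]
    ring
end

section
/- Let S = {s_i} be a patrolling schedule on the three edges of a triangle that is not cyclic: for some indices k and ℓ ≥ 4, edge α is visited at steps k and k+ℓ, edge β at steps k+1 and k+3, and edge γ at step k+2. Then the 1-gap of S is at least min{G', G''}, where G' is the perimeter of triangle s_k s_{k+1} s_{k+2} and G'' is the perimeter of triangle s_{k+2} s_{k+3} s_{k+ℓ}; consequently, one of the two 3-periodic cyclic schedules cycling through these point triples has 1-gap at most that of S. -/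
/-!
Closing the path `s_k → s_{k+1} → s_{k+2}` into a triangle at most doubles its length, and the
same holds for `s_{k+2} → s_{k+3} → s_{k+ℓ}`. So the smaller perimeter, being at most their
average, is at most the length of the concatenated path `s_k → ⋯ → s_{k+3} → s_{k+ℓ}`, which by
the triangle inequality is at most the length of the schedule's path `s_k → s_{k+1} → ⋯ → s_{k+ℓ}`.
-/

open Finset

variable {α : Type*} [PseudoMetricSpace α]

def perimeter (x y z : α) : ℝ :=
  dist x y + dist y z + dist z x

theorem perimeter_le_two_mul (x y z : α) :
    perimeter x y z ≤ 2 * (dist x y + dist y z) := by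
  unfold perimeter
  linarith [dist_triangle z y x, dist_comm z y, dist_comm y x]

theorem min_perimeter_le_dist_add_dist_add_dist_add_dist (a b c d e : α) :
    min (perimeter a b c) (perimeter c d e) ≤ dist a b + dist b c + dist c d + dist d e := by
  linarith [perimeter_le_two_mul a b c, perimeter_le_two_mul c d e,
    min_le_left (perimeter a b c) (perimeter c d e), min_le_right (perimeter a b c) (perimeter c d e)]

theorem dist_le_sum_range_dist_add (s : ℕ → α) (k n : ℕ) :
    dist (s k) (s (k + n)) ≤ ∑ i ∈ range n, dist (s (k + i)) (s (k + i + 1)) :=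
  dist_le_range_sum_dist (fun i => s (k + i)) n

theorem dist_add_dist_add_dist_add_dist_le_sum_range (s : ℕ → α) (k : ℕ) {ℓ : ℕ} (hℓ : 3 ≤ ℓ) :
    dist (s k) (s (k + 1)) + dist (s (k + 1)) (s (k + 2)) + dist (s (k + 2)) (s (k + 3))
        + dist (s (k + 3)) (s (k + ℓ))
      ≤ ∑ i ∈ range ℓ, dist (s (k + i)) (s (k + i + 1)) := by
  obtain ⟨m, rfl⟩ : ∃ m, ℓ = 3 + m := ⟨ℓ - 3, by omega⟩
  rw [sum_range_add, sum_range_succ, sum_range_succ, sum_range_one, add_zero]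
  gcongr
  simpa only [add_assoc] using dist_le_sum_range_dist_add s (k + 3) m

theorem stmt_16 (s : ℕ → EuclideanSpace ℝ (Fin 2)) (k ℓ : ℕ) (hℓ : 4 ≤ ℓ) :
    min (dist (s k) (s (k+1)) + dist (s (k+1)) (s (k+2)) + dist (s (k+2)) (s k))
        (dist (s (k+2)) (s (k+3)) + dist (s (k+3)) (s (k+ℓ)) + dist (s (k+ℓ)) (s (k+2)))
      ≤ ∑ i ∈ Finset.range ℓ, dist (s (k+i)) (s (k+i+1)) :=
  (min_perimeter_le_dist_add_dist_add_dist_add_dist (s k) (s (k+1)) (s (k+2)) (s (k+3))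
    (s (k+ℓ))).trans (dist_add_dist_add_dist_add_dist_le_sum_range s k (by omega))
end
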